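/- arXiv:1602.03986 — 2 statements merged into one kernel-verified Lean document; each statement's English description precedes it below -/
import Mathlib

section
/- The set of sums of squares of degree-d forms in n variables is a closed convex cone with nonempty interior in the vector space of degree-2d forms. -/
open MvPolynomial Finsupp

/-- `f` is a sum of squares of forms of degree `d` in `n` variables. -/
def IsSOSForm (n d : ℕ) (f : MvPolynomial (Fin n) ℝ) : Prop :=
  ∃ (N : ℕ) (g : Fin N → MvPolynomial (Fin n) ℝ),
    (∀ i, (g i).IsHomogeneous d) ∧ f = ∑ i, (g i) ^ 2

/-- The cone `Σ_{2d}` of sums of squares of degree-`d` forms, as a subset of the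
finite-dimensional real vector space `R[x]_{2d}` of forms of degree `2d`. -/
def SigmaCone (n d : ℕ) : Set (homogeneousSubmodule (Fin n) ℝ (2 * d)) :=
  {f | IsSOSForm n d (f : MvPolynomial (Fin n) ℝ)}

/-- The canonical topology on the finite-dimensional real vector space of forms. -/
noncomputable instance (n d : ℕ) : TopologicalSpace (homogeneousSubmodule (Fin n) ℝ d) :=
  moduleTopology ℝ _

/-- A form is positive definite if it is positive away from the origin. -/
def PosDefForm (n : ℕ) (f : MvPolynomial (Fin n) ℝ) : Prop :=
  ∀ x : Fin n → ℝ, x ≠ 0 → 0 < eval x f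

/-- For a sos form `f` of degree `2d`, the set `U_f` of forms `p` of degree `d`
such that `f - c p ^ 2` is sos for some `c > 0`. -/
def Uset (n d : ℕ) (f : MvPolynomial (Fin n) ℝ) : Set (MvPolynomial (Fin n) ℝ) :=
  {p | p.IsHomogeneous d ∧ ∃ c : ℝ, 0 < c ∧ IsSOSForm n d (f - c • p ^ 2)}

/-!
Convexity and the cone property are immediate. Every monomial `x^(α+β)` of degree `2d` equals
`((x^α + x^β)² - (x^α - x^β)²) / 4`, so `Σ_{2d}` spans `R[x]_{2d}`, and a convex set containing `0`
that spans a finite-dimensional space has nonempty interior.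

For closedness, write the forms of a sos decomposition in a basis of `R[x]_d`, with coefficient
matrix `A`. The sum of squares only depends on the positive semidefinite matrix `AᵀA = BᵀB` with `B`
square, so every sos form is a sum of `m = dim R[x]_d` squares: `Σ_{2d}` is the range of the map
`(p_1, …, p_m) ↦ ∑ p_i²`. This map is quadratic and vanishes only at `0`, so by compactness of the
unit sphere it grows like `‖p‖²`; hence it is proper and its range is closed.
-/

open Matrix Filter Module

instance (n k : ℕ) : IsModuleTopology ℝ (homogeneousSubmodule (Fin n) ℝ k) := ⟨rfl⟩

instance (n k : ℕ) : FiniteDimensional ℝ (homogeneousSubmodule (Fin n) ℝ k) :=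
  Module.Finite.iff_fg.2 (homogeneousSubmodule_fg (Fin n) ℝ k)

instance (n k : ℕ) : IsTopologicalAddGroup (homogeneousSubmodule (Fin n) ℝ k) :=
  IsModuleTopology.topologicalAddGroup ℝ _

instance (n k : ℕ) : T2Space (homogeneousSubmodule (Fin n) ℝ k) :=
  T2Space.of_injective_continuous (finBasis ℝ _).equivFun.injective
    (IsModuleTopology.continuous_of_linearMap (finBasis ℝ _).equivFun.toLinearMap)

section Homogeneous

variable {E F : Type*} {f : E → F} {k : ℕ}

section Normed

variable [NormedAddCommGroup E] [NormedSpace ℝ E] [FiniteDimensional ℝ E]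
  [NormedAddCommGroup F] [NormedSpace ℝ F]

theorem exists_pos_mul_norm_pow_le_norm_apply (hf : Continuous f) (hk : k ≠ 0)
    (hsmul : ∀ t : ℝ, 0 ≤ t → ∀ x, f (t • x) = t ^ k • f x) (hzero : ∀ x, f x = 0 → x = 0) :
    ∃ m > 0, ∀ x, m * ‖x‖ ^ k ≤ ‖f x‖ := by
  rcases subsingleton_or_nontrivial E with hE | hE
  · exact ⟨1, one_pos, fun x => by simp [Subsingleton.elim x 0, hk]⟩
  obtain ⟨x₀, hx₀, hmin⟩ := (isCompact_sphere (0 : E) 1).exists_isMinOn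
    (NormedSpace.sphere_nonempty.2 zero_le_one) hf.norm.continuousOn
  have hfx₀ : f x₀ ≠ 0 := fun h => by simp [hzero x₀ h] at hx₀
  refine ⟨‖f x₀‖, norm_pos_iff.2 hfx₀, fun x => ?_⟩
  rcases eq_or_ne x 0 with rfl | hx
  · simp [hk]
  have hu : ‖x‖⁻¹ • x ∈ Metric.sphere (0 : E) 1 := by simp [norm_smul, hx]
  have hfx : f x = ‖x‖ ^ k • f (‖x‖⁻¹ • x) := by
    rw [← hsmul _ (norm_nonneg x), smul_inv_smul₀ (norm_ne_zero_iff.2 hx)]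
  calc ‖f x₀‖ * ‖x‖ ^ k ≤ ‖f (‖x‖⁻¹ • x)‖ * ‖x‖ ^ k := by gcongr; exact hmin hu
    _ = ‖f x‖ := by rw [hfx, norm_smul, norm_pow, norm_norm, mul_comm]

theorem isProperMap_of_smul_eq_pow_smul [FiniteDimensional ℝ F] (hf : Continuous f) (hk : k ≠ 0)
    (hsmul : ∀ t : ℝ, 0 ≤ t → ∀ x, f (t • x) = t ^ k • f x) (hzero : ∀ x, f x = 0 → x = 0) :
    IsProperMap f := by
  obtain ⟨m, hm, hbound⟩ := exists_pos_mul_norm_pow_le_norm_apply hf hk hsmul hzero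
  refine isProperMap_iff_tendsto_cocompact.2 ⟨hf, ?_⟩
  rw [← Metric.cobounded_eq_cocompact, ← Metric.cobounded_eq_cocompact,
    ← tendsto_norm_atTop_iff_cobounded]
  exact tendsto_atTop_mono hbound <|
    ((tendsto_pow_atTop hk).comp tendsto_norm_cobounded_atTop).const_mul_atTop hm

end Normed

variable [AddCommGroup E] [TopologicalSpace E] [IsTopologicalAddGroup E] [T2Space E]
  [Module ℝ E] [ContinuousSMul ℝ E] [FiniteDimensional ℝ E]
  [AddCommGroup F] [TopologicalSpace F] [IsTopologicalAddGroup F] [T2Space F]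
  [Module ℝ F] [ContinuousSMul ℝ F] [FiniteDimensional ℝ F]

theorem isClosed_range_of_smul_eq_pow_smul (hf : Continuous f) (hk : k ≠ 0)
    (hsmul : ∀ t : ℝ, 0 ≤ t → ∀ x, f (t • x) = t ^ k • f x) (hzero : ∀ x, f x = 0 → x = 0) :
    IsClosed (Set.range f) := by
  let eE : E ≃L[ℝ] _ := toEuclidean
  let eF : F ≃L[ℝ] _ := toEuclidean
  have hg : IsProperMap (eF ∘ f ∘ eE.symm) :=
    isProperMap_of_smul_eq_pow_smul (by fun_prop) hk
      (fun t ht x => by simp [hsmul t ht])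
      (fun x hx => eE.symm.map_eq_zero_iff.1 (hzero _ (by simpa using hx)))
  have hfg : f = eF.symm ∘ (eF ∘ f ∘ eE.symm) ∘ eE := by ext; simp
  rw [hfg]
  exact (eF.symm.toHomeomorph.isProperMap.comp
    (hg.comp eE.toHomeomorph.isProperMap)).isClosedMap.isClosed_range

end Homogeneous

theorem affineSpan_eq_top_of_zero_mem_of_span_eq_top {k V : Type*} [Ring k] [AddCommGroup V]
    [Module k V] {s : Set V} (h0 : 0 ∈ s) (hs : Submodule.span k s = ⊤) : affineSpan k s = ⊤ := by
  rw [AffineSubspace.affineSpan_eq_top_iff_vectorSpan_eq_top_of_nonempty k V V ⟨0, h0⟩,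
    vectorSpan_eq_span_vsub_set_right k h0]
  simpa using hs

theorem Convex.interior_nonempty_of_zero_mem_of_span_eq_top {E : Type*} [AddCommGroup E]
    [TopologicalSpace E] [IsTopologicalAddGroup E] [T2Space E] [Module ℝ E] [ContinuousSMul ℝ E]
    [FiniteDimensional ℝ E] {s : Set E} (hs : Convex ℝ s) (h0 : 0 ∈ s)
    (hspan : Submodule.span ℝ s = ⊤) : (interior s).Nonempty := by
  let e : E ≃L[ℝ] _ := toEuclidean
  have hspan' : Submodule.span ℝ (e '' s) = ⊤ := by
    rw [show e '' s = e.toLinearMap '' s from rfl, Submodule.span_image, hspan, Submodule.map_top,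
      LinearMap.range_eq_top]
    exact e.surjective
  have : (interior (e '' s)).Nonempty :=
    (hs.linear_image e.toLinearMap).interior_nonempty_iff_affineSpan_eq_top.2
      (affineSpan_eq_top_of_zero_mem_of_span_eq_top ⟨0, h0, map_zero e⟩ hspan')
  rw [show e '' s = e.toHomeomorph '' s from rfl, ← e.toHomeomorph.image_interior] at this
  exact this.of_image

theorem sum_mulVec_sq {R ι κ : Type*} [CommSemiring R] [Fintype ι] [Fintype κ]
    (A : Matrix ι κ R) (b : κ → R) : ∑ i, (A *ᵥ b) i ^ 2 = b ⬝ᵥ (Aᵀ * A) *ᵥ b := by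
  rw [← mulVec_mulVec, dotProduct_mulVec, vecMul_transpose]
  simp only [dotProduct, sq]

theorem Submodule.exists_sum_sq_eq_sum_sq_fin_finrank {R ι : Type*} [CommRing R] [Algebra ℝ R]
    [Fintype ι] (V : Submodule ℝ R) [FiniteDimensional ℝ V] (u : ι → V) :
    ∃ v : Fin (finrank ℝ V) → V, ∑ i, (u i : R) ^ 2 = ∑ l, (v l : R) ^ 2 := by
  let b := finBasis ℝ V
  let A : Matrix ι (Fin (finrank ℝ V)) ℝ := .of fun i j => b.repr (u i) j
  obtain ⟨B, hB⟩ : ∃ B : Matrix (Fin (finrank ℝ V)) (Fin (finrank ℝ V)) ℝ, Aᵀ * A = Bᵀ * B := by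
    open scoped MatrixOrder in
    obtain ⟨B, hB⟩ := CStarAlgebra.nonneg_iff_eq_star_mul_self.mp
      (posSemidef_conjTranspose_mul_self A).nonneg
    exact ⟨B, by simpa [star_eq_conjTranspose] using hB⟩
  let bR : Fin (finrank ℝ V) → R := fun j => b j
  refine ⟨fun l => ∑ j, B l j • b j, ?_⟩
  calc ∑ i, (u i : R) ^ 2 = ∑ i, (A.map (algebraMap ℝ R) *ᵥ bR) i ^ 2 := by
        congr! 2 with i
        simp only [mulVec, dotProduct, Matrix.map_apply, of_apply, A, bR, ← Algebra.smul_def]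
        exact_mod_cast congrArg Subtype.val (b.sum_repr (u i)).symm
    _ = ∑ l, (B.map (algebraMap ℝ R) *ᵥ bR) l ^ 2 := by
        rw [sum_mulVec_sq, sum_mulVec_sq, ← transpose_map, ← transpose_map, ← Matrix.map_mul,
          ← Matrix.map_mul, hB]
    _ = ∑ l, ((∑ j, B l j • b j : V) : R) ^ 2 := by
        simp [mulVec, dotProduct, Algebra.smul_def, bR]

theorem MvPolynomial.eq_zero_of_sum_sq_eq_zero {σ ι : Type*} [Fintype ι]
    {g : ι → MvPolynomial σ ℝ} (h : ∑ i, g i ^ 2 = 0) (i : ι) : g i = 0 := by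
  refine MvPolynomial.funext fun x => ?_
  have hx := congrArg (eval x) h
  simp only [map_sum, map_pow, map_zero] at hx
  simpa using (Finset.sum_eq_zero_iff_of_nonneg fun j _ => sq_nonneg _).1 hx i (Finset.mem_univ i)

section Forms

variable {n d : ℕ}

theorem IsSOSForm.isHomogeneous {f : MvPolynomial (Fin n) ℝ} (hf : IsSOSForm n d f) :
    f.IsHomogeneous (2 * d) := by
  obtain ⟨N, g, hg, rfl⟩ := hf
  rw [two_mul, ← mul_two]
  exact IsHomogeneous.sum _ _ _ fun i _ => (hg i).pow 2

theorem IsSOSForm.add {f g : MvPolynomial (Fin n) ℝ} (hf : IsSOSForm n d f)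
    (hg : IsSOSForm n d g) : IsSOSForm n d (f + g) := by
  obtain ⟨N, u, hu, rfl⟩ := hf
  obtain ⟨M, v, hv, rfl⟩ := hg
  refine ⟨N + M, Fin.append u v, Fin.addCases (by simpa using hu) (by simpa using hv), ?_⟩
  simp [Fin.sum_univ_add]

theorem IsSOSForm.smul {f : MvPolynomial (Fin n) ℝ} {c : ℝ} (hc : 0 ≤ c)
    (hf : IsSOSForm n d f) : IsSOSForm n d (c • f) := by
  obtain ⟨N, u, hu, rfl⟩ := hf
  refine ⟨N, fun i => √c • u i, fun i => (homogeneousSubmodule (Fin n) ℝ d).smul_mem _ (hu i), ?_⟩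
  simp [Finset.smul_sum, smul_pow, Real.sq_sqrt hc]

theorem isSOSForm_sq {p : MvPolynomial (Fin n) ℝ} (hp : p.IsHomogeneous d) :
    IsSOSForm n d (p ^ 2) :=
  ⟨1, fun _ => p, fun _ => hp, by simp⟩

theorem mul_mem_span_setOf_isSOSForm {p q : MvPolynomial (Fin n) ℝ} (hp : p.IsHomogeneous d)
    (hq : q.IsHomogeneous d) : p * q ∈ Submodule.span ℝ {f | IsSOSForm n d f} := by
  have hpq : p * q = (4⁻¹ : ℝ) • (p + q) ^ 2 - (4⁻¹ : ℝ) • (p - q) ^ 2 := by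
    rw [← smul_sub, show (p + q) ^ 2 - (p - q) ^ 2 = (4 : ℝ) • (p * q) by
      rw [smul_eq_C_mul, map_ofNat]; ring, smul_smul]
    norm_num
  rw [hpq]
  exact sub_mem (Submodule.smul_mem _ _ (Submodule.subset_span (isSOSForm_sq (hp.add hq))))
    (Submodule.smul_mem _ _ (Submodule.subset_span (isSOSForm_sq (hp.sub hq))))

theorem span_setOf_isSOSForm :
    Submodule.span ℝ {f | IsSOSForm n d f} = homogeneousSubmodule (Fin n) ℝ (2 * d) := by
  refine le_antisymm (Submodule.span_le.2 fun f hf => hf.isHomogeneous) ?_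
  rw [homogeneousSubmodule_eq_finsupp_supported, AddMonoidAlgebra.supported_eq_span_single,
    Submodule.span_le]
  rintro _ ⟨γ, hγ : γ.degree = 2 * d, rfl⟩
  obtain ⟨α, hαγ, hα⟩ := γ.exists_le_degree_eq d (by omega)
  obtain ⟨β, rfl⟩ := le_iff_exists_add.mp hαγ
  have hβ : β.degree = d := by rw [map_add] at hγ; omega
  change monomial (α + β) (1 : ℝ) ∈ _
  rw [← mul_one (1 : ℝ), ← monomial_mul]
  exact mul_mem_span_setOf_isSOSForm (isHomogeneous_monomial _ hα) (isHomogeneous_monomial _ hβ)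

theorem mul_mem_homogeneousSubmodule_two_mul {σ R : Type*} [CommSemiring R]
    {p q : MvPolynomial σ R} (hp : p ∈ homogeneousSubmodule σ R d)
    (hq : q ∈ homogeneousSubmodule σ R d) : p * q ∈ homogeneousSubmodule σ R (2 * d) :=
  two_mul d ▸ homogeneousSubmodule_mul d d (Submodule.mul_mem_mul hp hq)

variable (n d) in
noncomputable def formMul :
    homogeneousSubmodule (Fin n) ℝ d →ₗ[ℝ] homogeneousSubmodule (Fin n) ℝ d →ₗ[ℝ]
      homogeneousSubmodule (Fin n) ℝ (2 * d) :=
  LinearMap.mk₂ ℝ (fun p q => ⟨p * q, mul_mem_homogeneousSubmodule_two_mul p.2 q.2⟩)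
    (fun _ _ _ => Subtype.ext (add_mul _ _ _)) (fun _ _ _ => Subtype.ext (smul_mul_assoc _ _ _))
    (fun _ _ _ => Subtype.ext (mul_add _ _ _)) (fun _ _ _ => Subtype.ext (mul_smul_comm _ _ _))

variable (n d) in
noncomputable def sumSquares (N : ℕ) (g : Fin N → homogeneousSubmodule (Fin n) ℝ d) :
    homogeneousSubmodule (Fin n) ℝ (2 * d) :=
  ∑ i, formMul n d (g i) (g i)

theorem coe_sumSquares {N : ℕ} (g : Fin N → homogeneousSubmodule (Fin n) ℝ d) :
    (sumSquares n d N g : MvPolynomial (Fin n) ℝ) = ∑ i, (g i : MvPolynomial (Fin n) ℝ) ^ 2 := by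
  simp [sumSquares, formMul, sq]

theorem continuous_formMul :
    Continuous fun p : homogeneousSubmodule (Fin n) ℝ d × homogeneousSubmodule (Fin n) ℝ d =>
      formMul n d p.1 p.2 :=
  IsModuleTopology.continuous_bilinear_of_finite_left (formMul n d)

theorem continuous_sumSquares (N : ℕ) : Continuous (sumSquares n d N) :=
  continuous_finsetSum _ fun i _ =>
    continuous_formMul.comp (f := fun g : Fin N → homogeneousSubmodule (Fin n) ℝ d => (g i, g i))
      (by fun_prop)

theorem sumSquares_smul {N : ℕ} (t : ℝ) (g : Fin N → homogeneousSubmodule (Fin n) ℝ d) :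
    sumSquares n d N (t • g) = t ^ 2 • sumSquares n d N g := by
  simp [sumSquares, Finset.smul_sum, smul_smul, sq]

theorem eq_zero_of_sumSquares_eq_zero {N : ℕ} {g : Fin N → homogeneousSubmodule (Fin n) ℝ d}
    (h : sumSquares n d N g = 0) : g = 0 :=
  funext fun i => Subtype.ext <|
    MvPolynomial.eq_zero_of_sum_sq_eq_zero (by rw [← coe_sumSquares, h]; rfl) i

theorem sigmaCone_eq_range_sumSquares :
    SigmaCone n d = Set.range (sumSquares n d (finrank ℝ (homogeneousSubmodule (Fin n) ℝ d))) := by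
  ext f
  constructor
  · rintro ⟨N, u, hu, hf⟩
    obtain ⟨v, hv⟩ := (homogeneousSubmodule (Fin n) ℝ d).exists_sum_sq_eq_sum_sq_fin_finrank
      fun i => ⟨u i, hu i⟩
    exact ⟨v, Subtype.ext (by rw [coe_sumSquares, hf, ← hv])⟩
  · rintro ⟨g, rfl⟩
    exact ⟨_, fun i => g i, fun i => (g i).2, coe_sumSquares g⟩

theorem isClosed_sigmaCone : IsClosed (SigmaCone n d) := by
  rw [sigmaCone_eq_range_sumSquares]
  exact isClosed_range_of_smul_eq_pow_smul (f := sumSquares n d _) (continuous_sumSquares _)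
    two_ne_zero (fun t _ g => sumSquares_smul t g) fun _ => eq_zero_of_sumSquares_eq_zero

theorem convex_sigmaCone : Convex ℝ (SigmaCone n d) :=
  fun _ hf _ hg _ _ ha hb _ => (hf.smul ha).add (hg.smul hb)

theorem zero_mem_sigmaCone : 0 ∈ SigmaCone n d :=
  ⟨0, Fin.elim0, fun i => i.elim0, by simp⟩

theorem image_coe_sigmaCone :
    ((↑) : homogeneousSubmodule (Fin n) ℝ (2 * d) → MvPolynomial (Fin n) ℝ) '' SigmaCone n d =
      {f | IsSOSForm n d f} :=
  Set.ext fun f => ⟨fun ⟨_, hg, hgf⟩ => hgf ▸ hg, fun hf => ⟨⟨f, hf.isHomogeneous⟩, hf, rfl⟩⟩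

theorem span_sigmaCone : Submodule.span ℝ (SigmaCone n d) = ⊤ := by
  apply Submodule.map_injective_of_injective
    (homogeneousSubmodule (Fin n) ℝ (2 * d)).injective_subtype
  rw [Submodule.map_span, Submodule.coe_subtype, image_coe_sigmaCone, span_setOf_isSOSForm,
    Submodule.map_subtype_top]

end Forms

theorem sigmaCone_isClosed_convex_cone_nonempty_interior (n d : ℕ) :
    IsClosed (SigmaCone n d) ∧ Convex ℝ (SigmaCone n d) ∧
    (∀ c : ℝ, 0 ≤ c → ∀ f ∈ SigmaCone n d, c • f ∈ SigmaCone n d) ∧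
    (interior (SigmaCone n d)).Nonempty :=
  ⟨isClosed_sigmaCone, convex_sigmaCone, fun _ hc _ hf => IsSOSForm.smul hc hf,
    convex_sigmaCone.interior_nonempty_of_zero_mem_of_span_eq_top zero_mem_sigmaCone
      span_sigmaCone⟩
end

section
/- A form f of degree 2d lies in the interior of the sums-of-squares cone Σ_{2d} if and only if f admits a representation f = f_1^2 + ... + f_N^2 in which f_1, ..., f_N span the space R[x]_d of all degree-d forms. -/
open MvPolynomial Finsupp

/-!
A sum of squares `∑ gᵢ²` is the image of the identity under the Gram map `A ↦ ∑ A i j • gᵢ gⱼ`.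
If the `gᵢ` span all forms of degree `d`, their products span all forms of degree `2d`, so the
Gram map is a linear surjection onto `R[x]_{2d}` and hence open. Gram matrices close enough to
the identity still give sums of squares, so a neighbourhood of `f` lies in `Σ_{2d}`.
Conversely, if `f` is interior then `f - c ∑ pₖ²` is still a sum of squares for a spanning
family `pₖ` and small `c > 0`; adding back `c ∑ pₖ²` gives a spanning representation.
-/

open Filter Topology

lemma MvPolynomial.homogeneousSubmodule_mul_eq {σ R : Type*} [CommSemiring R] (i j : ℕ) :
    homogeneousSubmodule σ R i * homogeneousSubmodule σ R j =
      homogeneousSubmodule σ R (i + j) := by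
  rw [← homogeneousSubmodule_one_pow R i, ← homogeneousSubmodule_one_pow R j,
    ← homogeneousSubmodule_one_pow R (i + j), pow_add]

lemma Fintype.range_linearCombination_pairwise_mul {ι R A : Type*} [Fintype ι] [CommSemiring R]
    [Semiring A] [Algebra R A] (g : ι → A) :
    LinearMap.range (Fintype.linearCombination R fun q : ι × ι => g q.1 * g q.2) =
      Submodule.span R (Set.range g) * Submodule.span R (Set.range g) := by
  rw [Fintype.range_linearCombination, Submodule.span_mul_span]
  congr 1
  ext x
  simp [Set.mem_mul]

lemma exists_pos_add_smul_mem_of_mem_nhds {E : Type*} [AddCommMonoid E] [Module ℝ E]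
    [TopologicalSpace E] [ContinuousAdd E] [ContinuousSMul ℝ E] {s : Set E} {x : E}
    (hs : s ∈ 𝓝 x) (v : E) :
    ∃ c : ℝ, 0 < c ∧ x + c • v ∈ s := by
  have hray : Tendsto (fun c : ℝ => x + c • v) (𝓝[>] 0) (𝓝 x) := by
    have : Continuous fun c : ℝ => x + c • v := by fun_prop
    exact (this.tendsto' 0 x (by simp)).mono_left nhdsWithin_le_nhds
  obtain ⟨c, hcs, hc⟩ := ((hray.eventually hs).and self_mem_nhdsWithin).exists
  exact ⟨c, hc, hcs⟩

lemma span_range_smul_of_ne_zero {K M ι : Type*} [Field K] [AddCommGroup M] [Module K M]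
    {a : K} (ha : a ≠ 0) (p : ι → M) :
    Submodule.span K (Set.range (a • p)) = Submodule.span K (Set.range p) := by
  rw [Pi.smul_def, Set.range_smul, Submodule.span_smul_eq_of_isUnit _ _ ha.isUnit]

instance (n d : ℕ) : IsModuleTopology ℝ (homogeneousSubmodule (Fin n) ℝ d) := ⟨rfl⟩

instance (n d : ℕ) : ContinuousAdd (homogeneousSubmodule (Fin n) ℝ d) :=
  IsModuleTopology.toContinuousAdd ℝ _

namespace IsSOSForm

variable {n d : ℕ}

lemma zero : IsSOSForm n d 0 :=
  ⟨0, Fin.elim0, fun i => i.elim0, by simp⟩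

lemma add_s1 {a b : MvPolynomial (Fin n) ℝ} (ha : IsSOSForm n d a) (hb : IsSOSForm n d b) :
    IsSOSForm n d (a + b) := by
  obtain ⟨N, g, hg, rfl⟩ := ha
  obtain ⟨M, h, hh, rfl⟩ := hb
  refine ⟨N + M, Fin.append g h, Fin.addCases (by simpa using hg) (by simpa using hh), ?_⟩
  simp [Fin.sum_univ_add]

lemma sum {ι : Type*} (s : Finset ι) {a : ι → MvPolynomial (Fin n) ℝ}
    (ha : ∀ i ∈ s, IsSOSForm n d (a i)) : IsSOSForm n d (∑ i ∈ s, a i) :=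
  Finset.sum_induction a _ (fun _ _ => add_s1) zero ha

lemma smul_sq {c : ℝ} (hc : 0 ≤ c) {p : MvPolynomial (Fin n) ℝ} (hp : p.IsHomogeneous d) :
    IsSOSForm n d (c • p ^ 2) := by
  refine ⟨1, fun _ => Real.sqrt c • p, fun _ => ?_, ?_⟩
  · rw [smul_eq_C_mul]
    exact hp.C_mul _
  · simp [smul_pow, Real.sq_sqrt hc]

lemma smul_sq_add_smul_sq_add_smul_mul {a b : MvPolynomial (Fin n) ℝ} (ha : a.IsHomogeneous d)
    (hb : b.IsHomogeneous d) {w t : ℝ} (hw : 0 ≤ w) (ht : |t| ≤ 2 * w) :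
    IsSOSForm n d (w • a ^ 2 + w • b ^ 2 + t • (a * b)) := by
  rcases hw.eq_or_lt with rfl | hw
  · obtain rfl : t = 0 := abs_nonpos_iff.mp (by simpa using ht)
    simpa using zero
  -- complete the square: with `s = t / 2w`, this is `w (a + s b)² + w (1 - s²) b²`
  set s := t / (2 * w)
  have hs : s ^ 2 ≤ 1 := by
    rw [sq_le_one_iff_abs_le_one, abs_div, abs_of_pos (by positivity : 0 < 2 * w)]
    exact div_le_one_of_le₀ ht (by positivity)
  have hsq : w • a ^ 2 + w • b ^ 2 + t • (a * b) =
      w • (a + s • b) ^ 2 + (w * (1 - s ^ 2)) • b ^ 2 := by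
    have ht' : t = 2 * w * s := by simp only [s]; field_simp
    simp only [ht', smul_eq_C_mul, map_mul, map_sub, map_one, map_pow, map_ofNat]
    ring
  rw [hsq]
  have hab : (a + s • b).IsHomogeneous d :=
    (homogeneousSubmodule (Fin n) ℝ d).add_mem ha (Submodule.smul_mem _ s hb)
  exact (smul_sq hw.le hab).add_s1 (smul_sq (by nlinarith) hb)

lemma isHomogeneous_s1 {f : MvPolynomial (Fin n) ℝ} (hf : IsSOSForm n d f) :
    f.IsHomogeneous (2 * d) := by
  obtain ⟨N, g, hg, rfl⟩ := hf
  exact IsHomogeneous.sum _ _ _ fun i _ => by simpa [two_mul, sq] using (hg i).mul (hg i)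

end IsSOSForm

lemma isSOSForm_sum_smul_mul_of_near_one {n d N : ℕ} {g : Fin N → MvPolynomial (Fin n) ℝ}
    (hg : ∀ i, (g i).IsHomogeneous d) {c : Fin N × Fin N → ℝ}
    (hc : ∀ i j, |c (i, j) - if i = j then 1 else 0| ≤ 1 / N) :
    IsSOSForm n d (∑ q, c q • (g q.1 * g q.2)) := by
  obtain rfl | hN := N.eq_zero_or_pos
  · simpa using IsSOSForm.zero
  -- spread `∑ i, g i ^ 2` evenly over the `N²` pairs `(i, j)`
  set w : ℝ := 1 / (2 * N)
  have hdiag : ∑ i, ∑ j, (if i = j then (1 : ℝ) else 0) • (g i * g j) = ∑ i, g i ^ 2 := by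
    simp [sq]
  have hspread : ∑ i : Fin N, ∑ _j : Fin N, w • g i ^ 2 + ∑ _i : Fin N, ∑ j, w • g j ^ 2 =
      ∑ i, g i ^ 2 := by
    simp only [Finset.sum_const, Finset.card_univ, Fintype.card_fin, ← Finset.smul_sum,
      ← Nat.cast_smul_eq_nsmul ℝ, smul_smul, ← add_smul]
    rw [show (N * w + N * w : ℝ) = 1 by simp only [w]; field_simp; ring, one_smul]
  have hsplit : ∑ q, c q • (g q.1 * g q.2) = ∑ i, ∑ j,
      (w • g i ^ 2 + w • g j ^ 2 + (c (i, j) - if i = j then 1 else 0) • (g i * g j)) := by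
    simp only [Finset.sum_add_distrib, sub_smul, Finset.sum_sub_distrib, hdiag, hspread,
      Fintype.sum_prod_type]
    abel
  rw [hsplit]
  refine IsSOSForm.sum _ fun i _ => IsSOSForm.sum _ fun j _ => ?_
  refine IsSOSForm.smul_sq_add_smul_sq_add_smul_mul (hg i) (hg j) (by positivity) ?_
  refine (hc i j).trans_eq ?_
  simp only [w]
  field_simp

lemma exists_spanning_sos_of_isSOSForm_add {n d m : ℕ} {a : MvPolynomial (Fin n) ℝ}
    (ha : IsSOSForm n d a) {p : Fin m → MvPolynomial (Fin n) ℝ}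
    (hp : Submodule.span ℝ (Set.range p) = homogeneousSubmodule (Fin n) ℝ d) :
    ∃ (N : ℕ) (g : Fin N → MvPolynomial (Fin n) ℝ),
      (∀ i, (g i).IsHomogeneous d) ∧ a + ∑ k, p k ^ 2 = ∑ i, g i ^ 2 ∧
      Submodule.span ℝ (Set.range g) = homogeneousSubmodule (Fin n) ℝ d := by
  obtain ⟨N, h, hh, rfl⟩ := ha
  have hpd (k : Fin m) : (p k).IsHomogeneous d := hp.le (Submodule.subset_span ⟨k, rfl⟩)
  have hg : ∀ i, (Fin.append h p i).IsHomogeneous d :=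
    Fin.addCases (by simpa using hh) (by simpa using hpd)
  refine ⟨N + m, Fin.append h p, hg, by simp [Fin.sum_univ_add], le_antisymm ?_ ?_⟩
  · exact Submodule.span_le.2 (Set.range_subset_iff.2 hg)
  · rw [← hp]
    exact Submodule.span_mono fun _ ⟨k, hk⟩ => ⟨Fin.natAdd N k, by simpa using hk⟩

lemma exists_spanning_sos_of_mem_interior {n d : ℕ}
    {f : homogeneousSubmodule (Fin n) ℝ (2 * d)} (hf : f ∈ interior (SigmaCone n d)) :
    ∃ (N : ℕ) (g : Fin N → MvPolynomial (Fin n) ℝ),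
      (∀ i, (g i).IsHomogeneous d) ∧ (f : MvPolynomial (Fin n) ℝ) = ∑ i, g i ^ 2 ∧
      Submodule.span ℝ (Set.range g) = homogeneousSubmodule (Fin n) ℝ d := by
  obtain ⟨m, p, hp⟩ :=
    Submodule.fg_iff_exists_fin_generating_family.1 (homogeneousSubmodule_fg (Fin n) ℝ d)
  have hpd (k : Fin m) : (p k).IsHomogeneous d := hp.le (Submodule.subset_span ⟨k, rfl⟩)
  have hQ : IsSOSForm n d (∑ k, p k ^ 2) := ⟨m, p, hpd, rfl⟩
  obtain ⟨c, hc, hfc⟩ := exists_pos_add_smul_mem_of_mem_nhds (mem_interior_iff_mem_nhds.1 hf)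
    (-⟨_, hQ.isHomogeneous_s1⟩ : homogeneousSubmodule (Fin n) ℝ (2 * d))
  obtain ⟨N, g, hg, hfg, hspan⟩ := exists_spanning_sos_of_isSOSForm_add hfc
    (p := Real.sqrt c • p) ((span_range_smul_of_ne_zero (by positivity) p).trans hp)
  refine ⟨N, g, hg, ?_, hspan⟩
  rw [← hfg]
  simp [smul_pow, Real.sq_sqrt hc.le, Finset.smul_sum]

lemma mem_interior_sigmaCone_of_spanning_sos {n d N : ℕ} {g : Fin N → MvPolynomial (Fin n) ℝ}
    (hg : ∀ i, (g i).IsHomogeneous d)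
    (hspan : Submodule.span ℝ (Set.range g) = homogeneousSubmodule (Fin n) ℝ d)
    {f : homogeneousSubmodule (Fin n) ℝ (2 * d)}
    (hf : (f : MvPolynomial (Fin n) ℝ) = ∑ i, g i ^ 2) :
    f ∈ interior (SigmaCone n d) := by
  set L := Fintype.linearCombination ℝ fun q : Fin N × Fin N => g q.1 * g q.2
  have hL : LinearMap.range L = homogeneousSubmodule (Fin n) ℝ (2 * d) := by
    rw [Fintype.range_linearCombination_pairwise_mul, hspan, homogeneousSubmodule_mul_eq, two_mul]
  set T := L.codRestrict _ fun c => hL.le (LinearMap.mem_range_self L c)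
  have hT : Function.Surjective T := fun p => by
    obtain ⟨c, hc⟩ := hL.ge p.2
    exact ⟨c, Subtype.ext hc⟩
  set δ : Fin N × Fin N → ℝ := fun q => if q.1 = q.2 then 1 else 0
  have hTδ : T δ = f := Subtype.ext <| by
    simp [T, L, δ, Fintype.linearCombination_apply, Fintype.sum_prod_type, hf, sq]
  have hnear : {c | ∀ i j, |c (i, j) - δ (i, j)| ≤ 1 / N} ∈ 𝓝 δ := by
    refine eventually_all.2 fun i => eventually_all.2 fun j => ?_
    have hN : (0 : ℝ) < 1 / N := one_div_pos.2 (Nat.cast_pos.2 i.pos)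
    have hij : Continuous fun c : Fin N × Fin N → ℝ => c (i, j) := continuous_apply (i, j)
    exact hij.continuousAt.preimage_mem_nhds (Metric.closedBall_mem_nhds _ hN)
  rw [mem_interior_iff_mem_nhds, ← hTδ]
  refine mem_of_superset ((IsModuleTopology.isOpenMap_of_surjective hT).image_mem_nhds hnear) ?_
  rintro _ ⟨c, hc, rfl⟩
  exact isSOSForm_sum_smul_mul_of_near_one hg hc

theorem mem_interior_sigmaCone_iff_spanning_sos (n d : ℕ)
    (f : homogeneousSubmodule (Fin n) ℝ (2 * d)) :
    f ∈ interior (SigmaCone n d) ↔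
      ∃ (N : ℕ) (g : Fin N → MvPolynomial (Fin n) ℝ),
        (∀ i, (g i).IsHomogeneous d) ∧
        (f : MvPolynomial (Fin n) ℝ) = ∑ i, (g i) ^ 2 ∧
        Submodule.span ℝ (Set.range g) = homogeneousSubmodule (Fin n) ℝ d :=
  ⟨exists_spanning_sos_of_mem_interior, fun ⟨_, _, hg, hf, hspan⟩ =>
    mem_interior_sigmaCone_of_spanning_sos hg hspan hf⟩
end
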